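/- arXiv:1102.4196 — 5 statements merged into one kernel-verified Lean document; each statement's English description precedes it below -/
import Mathlib

section
/- Let k be an integer with k ≤ −3, let j be a half-integer with (k+1)/2 ≤ j ≤ −1/2, set j' := k/2 − j, and let s ∈ ℤ. Then the following two subsets of ℚ × ℚ are equal: A = { ( j(j+1)/(k+2) + (s−1)²k/4 − (−j+n)(s−1) + m , 2n − 2j − (s−1)k ) : m ∈ ℕ₀, n ∈ ℤ, n ≥ −m } and B = { ( j'(j'+1)/(k+2) + s²k/4 + (−j'+n)s + m , 2j' − sk − 2n ) : m ∈ ℕ₀, n ∈ ℤ, n ≥ −m }. (A is the set of (L₀, J⁰₀)-weights of the module D^{+,k,s−1}_j and B that of D^{−,k,s}_{k/2−j}; their equality is the key step in proving the equivalence D^{+,k,s−1}_j ≅ D^{−,k,s}_{k/2−j}.) -/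
/-- Let `k ≤ −3` be an integer, `j` a half-integer with
`(k+1)/2 ≤ j ≤ −1/2`, `j' := k/2 − j`, and `s ∈ ℤ`.  Then the set of
`(L₀, J⁰₀)`-weights of `D^{+,k,s−1}_j`,
`A = {(j(j+1)/(k+2) + (s−1)²k/4 − (−j+n)(s−1) + m , 2n − 2j − (s−1)k)}`,
equals the set of `(L₀, J⁰₀)`-weights of `D^{−,k,s}_{k/2−j}`,
`B = {(j'(j'+1)/(k+2) + s²k/4 + (−j'+n)s + m , 2j' − sk − 2n)}`,
both parametrized by `m ∈ ℕ₀` and `n ∈ ℤ` with `n ≥ −m`. -/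
theorem statement9 (k : ℤ) (hk : k ≤ -3) (j : ℚ)
    (hhalf : ∃ n : ℤ, (n : ℚ) = 2 * j)
    (hlow : ((k : ℚ) + 1) / 2 ≤ j) (hhigh : j ≤ -(1 / 2)) (s : ℤ) :
    {q : ℚ × ℚ | ∃ (m : ℕ) (n : ℤ), -(m : ℤ) ≤ n ∧
        q = (j * (j + 1) / ((k : ℚ) + 2) + ((s : ℚ) - 1) ^ 2 * (k : ℚ) / 4
              - (-j + (n : ℚ)) * ((s : ℚ) - 1) + (m : ℚ),
             2 * (n : ℚ) - 2 * j - ((s : ℚ) - 1) * (k : ℚ))} =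
    {q : ℚ × ℚ | ∃ (m : ℕ) (n : ℤ), -(m : ℤ) ≤ n ∧
        q = (((k : ℚ) / 2 - j) * (((k : ℚ) / 2 - j) + 1) / ((k : ℚ) + 2)
              + (s : ℚ) ^ 2 * (k : ℚ) / 4
              + (-((k : ℚ) / 2 - j) + (n : ℚ)) * (s : ℚ) + (m : ℚ),
             2 * ((k : ℚ) / 2 - j) - (s : ℚ) * (k : ℚ) - 2 * (n : ℚ))} := by
  have hk2 : (k : ℚ) + 2 ≠ 0 := by
    have : (k : ℚ) ≤ -3 := by exact_mod_cast hk
    intro h; linarith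
  ext q
  simp only [Set.mem_setOf_eq]
  constructor
  · rintro ⟨m, n, hn, rfl⟩
    have hmn : 0 ≤ (m : ℤ) + n := by linarith
    refine ⟨((m : ℤ) + n).toNat, -n, ?_, ?_⟩
    · rw [Int.toNat_of_nonneg hmn]; omega
    · have hcast : ((((m : ℤ) + n).toNat : ℚ)) = (m : ℚ) + (n : ℚ) := by
        rw [← Int.cast_natCast, Int.toNat_of_nonneg hmn]; push_cast; ring
      rw [Prod.ext_iff]
      constructor
      · simp only [hcast]
        push_cast
        field_simp
        ring
      · push_cast
        ring
  · rintro ⟨m, n, hn, rfl⟩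
    have hmn : 0 ≤ (m : ℤ) + n := by linarith
    refine ⟨((m : ℤ) + n).toNat, -n, ?_, ?_⟩
    · rw [Int.toNat_of_nonneg hmn]; omega
    · have hcast : ((((m : ℤ) + n).toNat : ℚ)) = (m : ℚ) + (n : ℚ) := by
        rw [← Int.cast_natCast, Int.toNat_of_nonneg hmn]; push_cast; ring
      rw [Prod.ext_iff]
      constructor
      · simp only [hcast]
        push_cast
        field_simp
        ring
      · push_cast
        ring
end

section
/- Let {J^a_n} on V and {J'^a_n} on W be level-k representations of affine sl(2), and let s ∈ ℤ. A linear functional β on the algebraic tensor product V ⊗ W satisfies β ∘ (J^a_n ⊗ id + id ⊗ J'^a_{−n}) = 0 for all a ∈ {0,+,−} and all n ∈ ℤ if and only if it satisfies the same family of conditions with {J^a_n} replaced by its spectral flow ϑ_s and {J'^a_n} replaced by its spectral flow ϑ_{−s}. Consequently, the space of two-point conformal blocks for (V, W) equals that for (ϑ_s V, ϑ_{−s} W). -/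
/-!
Level-`k` representations of affine `sl(2)`.

A level-`k` representation of affine `sl(2)` on a complex vector space `V` is a
family of linear endomorphisms `J⁰_n, J⁺_n, J⁻_n` (`n ∈ ℤ`) satisfying
`[J⁺_m, J⁻_n] = J⁰_{m+n} + k·m·δ_{m+n,0}·id`, `[J⁰_m, J^±_n] = ±2 J^±_{m+n}`,
`[J⁰_m, J⁰_n] = 2k·m·δ_{m+n,0}·id`, `[J⁺_m, J⁺_n] = [J⁻_m, J⁻_n] = 0`.

For `s ∈ ℤ`, the spectral flow `ϑ_s` replaces `J^±_n` by `J^±_{n∓s}` and `J⁰_n` by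
`J⁰_n − s·k·δ_{n,0}·id`.
-/

noncomputable section

/-- a family of operators `J⁰_n, J⁺_n, J⁻_n` (`n ∈ ℤ`) on `V` -/
structure AffineFamily (V : Type*) [AddCommGroup V] [Module ℂ V] where
  Jz : ℤ → Module.End ℂ V
  Jp : ℤ → Module.End ℂ V
  Jm : ℤ → Module.End ℂ V

variable {V W : Type*}

/-- the commutation relations making an `AffineFamily` a level-`k` representation of
affine `sl(2)` -/
def IsLevelRep [AddCommGroup V] [Module ℂ V] (k : ℂ) (ρ : AffineFamily V) : Prop :=
  (∀ m n : ℤ, ρ.Jp m * ρ.Jm n - ρ.Jm n * ρ.Jp m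
      = ρ.Jz (m + n) + (if m + n = 0 then k * (m : ℂ) else 0) • 1) ∧
  (∀ m n : ℤ, ρ.Jz m * ρ.Jp n - ρ.Jp n * ρ.Jz m = (2 : ℂ) • ρ.Jp (m + n)) ∧
  (∀ m n : ℤ, ρ.Jz m * ρ.Jm n - ρ.Jm n * ρ.Jz m = (-2 : ℂ) • ρ.Jm (m + n)) ∧
  (∀ m n : ℤ, ρ.Jz m * ρ.Jz n - ρ.Jz n * ρ.Jz m
      = (if m + n = 0 then 2 * k * (m : ℂ) else 0) • 1) ∧
  (∀ m n : ℤ, ρ.Jp m * ρ.Jp n = ρ.Jp n * ρ.Jp m) ∧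
  (∀ m n : ℤ, ρ.Jm m * ρ.Jm n = ρ.Jm n * ρ.Jm m)

/-- the spectral flow `ϑ_s` of a level-`k` family:
`J^±_n ↦ J^±_{n∓s}`, `J⁰_n ↦ J⁰_n − s·k·δ_{n,0}·id` -/
def flow [AddCommGroup V] [Module ℂ V] (k : ℂ) (s : ℤ) (ρ : AffineFamily V) :
    AffineFamily V where
  Jz n := ρ.Jz n - (if n = 0 then (s : ℂ) * k else 0) • 1
  Jp n := ρ.Jp (n - s)
  Jm n := ρ.Jm (n + s)

open TensorProduct

/-- the two-point conformal block (coinvariance) conditions for a functional `β` on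
`V ⊗ W`: `β ∘ (J^a_n ⊗ id + id ⊗ J'^a_{−n}) = 0` for all `a ∈ {0,+,−}`, `n ∈ ℤ` -/
def IsTwoPointBlock [AddCommGroup V] [Module ℂ V] [AddCommGroup W] [Module ℂ W]
    (ρ : AffineFamily V) (ρ' : AffineFamily W) (β : (V ⊗[ℂ] W) →ₗ[ℂ] ℂ) : Prop :=
  ∀ n : ℤ,
    β ∘ₗ (TensorProduct.map (ρ.Jz n) LinearMap.id
        + TensorProduct.map LinearMap.id (ρ'.Jz (-n))) = 0 ∧
    β ∘ₗ (TensorProduct.map (ρ.Jp n) LinearMap.id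
        + TensorProduct.map LinearMap.id (ρ'.Jp (-n))) = 0 ∧
    β ∘ₗ (TensorProduct.map (ρ.Jm n) LinearMap.id
        + TensorProduct.map LinearMap.id (ρ'.Jm (-n))) = 0

lemma flowJz_map_eq [AddCommGroup V] [Module ℂ V] [AddCommGroup W] [Module ℂ W]
    (k : ℂ) (s : ℤ) (ρ : AffineFamily V) (ρ' : AffineFamily W) (n : ℤ) :
    TensorProduct.map ((flow k s ρ).Jz n) LinearMap.id
        + TensorProduct.map LinearMap.id ((flow k (-s) ρ').Jz (-n))
      = TensorProduct.map (ρ.Jz n) LinearMap.id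
        + TensorProduct.map LinearMap.id (ρ'.Jz (-n)) := by
  apply TensorProduct.ext'
  intro x y
  by_cases hn : n = 0 <;>
    simp [flow, hn, TensorProduct.sub_tmul, TensorProduct.tmul_sub,
      TensorProduct.smul_tmul, TensorProduct.tmul_add, TensorProduct.tmul_smul,
      smul_smul] <;> abel

/-- Let `{J^a_n}` on `V` and `{J'^a_n}` on `W` be level-`k`
representations of affine `sl(2)` and `s ∈ ℤ`.  A linear functional `β` on `V ⊗ W`
satisfies the two-point conformal block conditions for `(V,W)` iff it satisfies them
with the representation on `V` replaced by its spectral flow `ϑ_s` and that on `W` by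
`ϑ_{−s}`; consequently the two spaces of two-point conformal blocks coincide. -/
theorem statement13 (k : ℂ) [AddCommGroup V] [Module ℂ V] [AddCommGroup W] [Module ℂ W]
    (ρ : AffineFamily V) (hρ : IsLevelRep k ρ)
    (ρ' : AffineFamily W) (hρ' : IsLevelRep k ρ') (s : ℤ) :
    (∀ β : (V ⊗[ℂ] W) →ₗ[ℂ] ℂ,
      IsTwoPointBlock ρ ρ' β ↔ IsTwoPointBlock (flow k s ρ) (flow k (-s) ρ') β) ∧
    {β : (V ⊗[ℂ] W) →ₗ[ℂ] ℂ | IsTwoPointBlock ρ ρ' β}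
      = {β | IsTwoPointBlock (flow k s ρ) (flow k (-s) ρ') β} := by

  have key : ∀ β : (V ⊗[ℂ] W) →ₗ[ℂ] ℂ,
      IsTwoPointBlock ρ ρ' β ↔ IsTwoPointBlock (flow k s ρ) (flow k (-s) ρ') β := by
    intro β
    constructor
    · intro h n
      refine ⟨?_, ?_, ?_⟩
      · rw [flowJz_map_eq]; exact (h n).1
      · have := (h (n - s)).2.1
        simpa [flow, show -(n - s) = -n - -s by ring] using this
      · have := (h (n + s)).2.2
        simpa [flow, show -(n + s) = -n + -s by ring] using this
    · intro h n
      refine ⟨?_, ?_, ?_⟩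
      · have := (h n).1
        rwa [flowJz_map_eq] at this
      · have := (h (n + s)).2.1
        simpa [flow, show -(n + s) - -s = -n by ring, add_sub_cancel_right] using this
      · have := (h (n - s)).2.2
        simpa [flow, show -(n - s) + -s = -n by ring, show s - n + -s = -n by ring, sub_add_cancel] using this
  exact ⟨key, Set.ext fun β => key β⟩
end
end

section
/- Let {J'^a_n} be a level-k representation of affine sl(2) on W, and let {J^a_n} be a level-k representation on V admitting a subspace V₀ ⊆ V with J^a_n(V₀) = 0 for all n ≥ 1 and J^a₀(V₀) ⊆ V₀ (a ∈ {0,+,−}), and such that V is free over the negative modes: there exist an enumeration X₁, X₂, X₃, … of the family {J^a_{−n} : a ∈ {0,+,−}, n ≥ 1} and a basis {v_t} of V₀ such that the vectors X_{i₁} X_{i₂} ⋯ X_{i_r} v_t, over all t and all finite non-increasing index sequences i₁ ≥ i₂ ≥ ⋯ ≥ i_r (r ≥ 0), form a basis of V. Then restriction of functionals, β ↦ β|_{V₀ ⊗ W}, is a linear isomorphism from the space of β ∈ (V ⊗ W)* satisfying β ∘ (J^a_n ⊗ id + id ⊗ J'^a_{−n}) = 0 for all a and all n ∈ ℤ, onto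 the space of ψ ∈ (V₀ ⊗ W)* satisfying ψ ∘ (J^a₀ ⊗ id + id ⊗ J'^a₀) = 0 and ψ ∘ (id ⊗ J'^a_{−m}) = 0 for all a ∈ {0,+,−} and all m ≥ 1. -/
/-!
Level-`k` representations of affine `sl(2)`.

A level-`k` representation of affine `sl(2)` on a complex vector space `V` is a
family of linear endomorphisms `J⁰_n, J⁺_n, J⁻_n` (`n ∈ ℤ`) satisfying
`[J⁺_m, J⁻_n] = J⁰_{m+n} + k·m·δ_{m+n,0}·id`, `[J⁰_m, J^±_n] = ±2 J^±_{m+n}`,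
`[J⁰_m, J⁰_n] = 2k·m·δ_{m+n,0}·id`, `[J⁺_m, J⁺_n] = [J⁻_m, J⁻_n] = 0`.

For `s ∈ ℤ`, the spectral flow `ϑ_s` replaces `J^±_n` by `J^±_{n∓s}` and `J⁰_n` by
`J⁰_n − s·k·δ_{n,0}·id`.
-/

noncomputable section

variable {V W : Type*}

open TensorProduct

/-- the negative-mode operators `{J^a_{−n} : a ∈ {0,+,−}, n ≥ 1}` of a family,
labelled by `Fin 3 × ℕ` (the label `(a, n)` corresponds to the mode `−(n+1)`) -/
def negMode [AddCommGroup V] [Module ℂ V] (ρ : AffineFamily V) (p : Fin 3 × ℕ) :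
    Module.End ℂ V :=
  if p.1 = 0 then ρ.Jz (-((p.2 : ℤ) + 1))
  else if p.1 = 1 then ρ.Jp (-((p.2 : ℤ) + 1))
  else ρ.Jm (-((p.2 : ℤ) + 1))

/-!
A functional `β` on `V ⊗ W` satisfies the conformal block identities iff `curry β : V → W*`
intertwines the modes of `V` with the contragredient modes `-(J'^a_{-n})ᵀ` on `W*`. An
intertwiner is determined by its values on `V₀`, since the words in the negative modes applied
to `V₀` span `V`. Conversely, a map `f` on `V₀` is extended by sending the basis vector
`X_{i₁}⋯X_{i_r} v_t` to `X*_{i₁}⋯X*_{i_r} f(v_t)`. Reordering words with the brackets shows that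
this rule holds for every word, not only the non-increasing ones, so the extension commutes with
the negative modes; the brackets `[J^a_n, X]` then carry the compatibility with the
non-negative modes from `V₀`, where it is the hypothesis on `f`, to all of `V`.
-/

def invCount : List ℕ → ℕ
  | [] => 0
  | x :: xs => xs.countP (x < ·) + invCount xs

lemma invCount_swap_lt (p s : List ℕ) {i j : ℕ} (h : i < j) :
    invCount (p ++ j :: i :: s) < invCount (p ++ i :: j :: s) := by
  induction p with
  | nil =>
    have : s.countP (j < ·) ≤ s.countP (i < ·) :=
      List.countP_mono_left fun a _ ha => by simp only [decide_eq_true_eq] at *; omega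
    simp only [List.nil_append, invCount, List.countP_cons, decide_eq_true_eq]
    rw [if_neg (by omega), if_pos h]
    omega
  | cons a p ih =>
    have := ((List.Perm.swap i j s).append_left p).countP_eq (a < ·)
    simp only [List.cons_append, invCount]
    omega

lemma exists_eq_append_cons_cons_lt {l : List ℕ} (h : ¬ l.IsChain (· ≥ ·)) :
    ∃ p i j s, l = p ++ i :: j :: s ∧ i < j := by
  induction l with
  | nil => exact absurd List.isChain_nil h
  | cons a t ih =>
    by_cases ht : t.IsChain (· ≥ ·)
    · match t with
      | [] => exact absurd (List.isChain_singleton a) h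
      | b :: t' =>
        have hab : ¬ a ≥ b := fun hab => h (List.isChain_cons_cons.2 ⟨hab, ht⟩)
        exact ⟨[], a, b, t', rfl, by omega⟩
    · obtain ⟨p, i, j, s, rfl, hij⟩ := ih ht
      exact ⟨a :: p, i, j, s, rfl, hij⟩

section Tensor

variable {M N : Type*} [AddCommGroup M] [Module ℂ M] [AddCommGroup N] [Module ℂ N]

lemma comp_map_add_map_eq_zero_iff (β : M ⊗[ℂ] N →ₗ[ℂ] ℂ) (A : Module.End ℂ M)
    (B : Module.End ℂ N) :
    β ∘ₗ (map A LinearMap.id + map LinearMap.id B) = 0 ↔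
      curry β ∘ₗ A = -B.dualMap ∘ₗ curry β := by
  simp only [← curry_injective.eq_iff, LinearMap.ext_iff, curry_apply, LinearMap.comp_apply,
    LinearMap.add_apply, map_tmul, LinearMap.id_apply, map_add, LinearMap.zero_apply,
    LinearMap.neg_apply, LinearMap.dualMap_apply, add_eq_zero_iff_eq_neg]

lemma comp_map_id_eq_zero_iff (β : M ⊗[ℂ] N →ₗ[ℂ] ℂ) (B : Module.End ℂ N) :
    β ∘ₗ map LinearMap.id B = 0 ↔ B.dualMap ∘ₗ curry β = 0 := by
  simp only [← curry_injective.eq_iff, LinearMap.ext_iff, curry_apply, LinearMap.comp_apply,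
    map_tmul, LinearMap.id_apply, LinearMap.zero_apply, LinearMap.dualMap_apply]

end Tensor

namespace AffineFamily

variable {U : Type*} [AddCommGroup V] [Module ℂ V] [AddCommGroup U] [Module ℂ U] {k : ℂ}

/-- `σ.mode a n` is `J^a_n`, the labels `0, 1, 2` standing for `0, +, −`. -/
def mode (σ : AffineFamily V) (a : Fin 3) (n : ℤ) : Module.End ℂ V :=
  ![σ.Jz, σ.Jp, σ.Jm] a n

lemma negMode_eq_mode (σ : AffineFamily V) (p : Fin 3 × ℕ) :
    negMode σ p = σ.mode p.1 (-((p.2 : ℤ) + 1)) := by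
  rcases p with ⟨a, m⟩
  fin_cases a <;> rfl

lemma mode_eq_negMode (σ : AffineFamily V) (a : Fin 3) {n : ℤ} (hn : n < 0) :
    σ.mode a n = negMode σ (a, (-n - 1).toNat) := by
  rw [negMode_eq_mode, Int.toNat_of_nonneg (by omega)]
  ring_nf

/-- `[J^a_m, J^b_n] = bracketCoeff a b • J^{bracketIndex a b}_{m+n} + δ_{m+n,0} k m · killing a b`;
where `bracketCoeff a b = 0` the value of `bracketIndex a b` is irrelevant. -/
def bracketCoeff : Fin 3 → Fin 3 → ℂ := ![![0, 2, -2], ![-2, 0, 1], ![2, -1, 0]]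

def bracketIndex : Fin 3 → Fin 3 → Fin 3 := ![![0, 1, 2], ![1, 0, 0], ![2, 0, 0]]

def killing : Fin 3 → Fin 3 → ℂ := ![![2, 0, 0], ![0, 0, 1], ![0, 1, 0]]

lemma bracketCoeff_swap (a b : Fin 3) : bracketCoeff b a = -bracketCoeff a b := by
  fin_cases a <;> fin_cases b <;> norm_num [bracketCoeff]

lemma bracketIndex_swap (a b : Fin 3) : bracketIndex b a = bracketIndex a b := by
  fin_cases a <;> fin_cases b <;> rfl

lemma killing_swap (a b : Fin 3) : killing b a = killing a b := by
  fin_cases a <;> fin_cases b <;> rfl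

def HasBracket (k : ℂ) (σ : AffineFamily V) : Prop :=
  ∀ (a b : Fin 3) (m n : ℤ) (x : V),
    σ.mode a m (σ.mode b n x) = σ.mode b n (σ.mode a m x)
      + bracketCoeff a b • σ.mode (bracketIndex a b) (m + n) x
      + (if m + n = 0 then killing a b * k * m else 0) • x

theorem _root_.IsLevelRep.hasBracket {σ : AffineFamily V} (h : IsLevelRep k σ) :
    HasBracket k σ := by
  obtain ⟨hpm, hzp, hzm, hzz, hpp, hmm⟩ := h
  simp only [LinearMap.ext_iff, LinearMap.sub_apply, LinearMap.add_apply, LinearMap.smul_apply,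
    Module.End.mul_apply, Module.End.one_apply] at hpm hzp hzm hzz hpp hmm
  intro a b m n x
  fin_cases a <;> fin_cases b <;>
    simp only [mode, bracketCoeff, bracketIndex, killing, Fin.zero_eta, Fin.mk_one,
      Fin.reduceFinMk, Matrix.cons_val, zero_mul, one_mul, ite_self, zero_smul, add_zero]
  · linear_combination (norm := module) hzz m n x
  · linear_combination (norm := module) hzp m n x
  · linear_combination (norm := module) hzm m n x
  · have h := hzp n m x
    rw [add_comm n m] at h
    linear_combination (norm := module) -h
  · exact hpp m n x
  · linear_combination (norm := module) hpm m n x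
  · have h := hzm n m x
    rw [add_comm n m] at h
    linear_combination (norm := module) -h
  · have h := hpm n m x
    rw [add_comm n m] at h
    split_ifs at h ⊢ with hmn
    · rw [show (n : ℂ) = -m by exact_mod_cast (by omega : n = -m)] at h
      linear_combination (norm := module) -h
    · linear_combination (norm := module) -h
  · exact hmm m n x

/-- The contragredient family, with the modes reversed: `β` satisfies the conformal block
identities exactly when `curry β` intertwines `ρ` with `ρ'.dual`. -/
def dual (σ : AffineFamily U) : AffineFamily (Module.Dual ℂ U) where
  Jz n := -(σ.Jz (-n)).dualMap
  Jp n := -(σ.Jp (-n)).dualMap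
  Jm n := -(σ.Jm (-n)).dualMap

lemma dual_mode (σ : AffineFamily U) (a : Fin 3) (n : ℤ) :
    σ.dual.mode a n = -(σ.mode a (-n)).dualMap := by
  fin_cases a <;> rfl

lemma HasBracket.dual {σ : AffineFamily U} (h : HasBracket k σ) : HasBracket k σ.dual := by
  intro a b m n φ
  ext u
  have H := congrArg φ (h b a (-n) (-m) u)
  simp only [map_add, map_smul, smul_eq_mul, Int.cast_neg] at H
  simp only [dual_mode, LinearMap.add_apply, LinearMap.smul_apply, LinearMap.neg_apply,
    LinearMap.dualMap_apply, map_neg, neg_neg, smul_eq_mul]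
  rw [bracketCoeff_swap, bracketIndex_swap, killing_swap, show -n + -m = -(m + n) by ring] at H
  split_ifs at H ⊢ with hmn hmn'
  · rw [show (m : ℂ) = -n by exact_mod_cast (by omega : m = -n)]
    linear_combination H
  · omega
  · omega
  · linear_combination H

lemma negMode_negMode {σ : AffineFamily V} (hσ : HasBracket k σ) (p q : Fin 3 × ℕ) (x : V) :
    negMode σ p (negMode σ q x) = negMode σ q (negMode σ p x)
      + bracketCoeff p.1 q.1 • negMode σ (bracketIndex p.1 q.1, p.2 + q.2 + 1) x := by
  simp only [negMode_eq_mode]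
  rw [hσ, if_neg (by omega), zero_smul, add_zero]
  congr 4

section Words

variable (σ : AffineFamily V) (e : ℕ ≃ Fin 3 × ℕ)

def wordProd (l : List ℕ) : Module.End ℂ V :=
  (l.map fun i => negMode σ (e i)).prod

@[simp] lemma wordProd_nil : σ.wordProd e [] = 1 := rfl

@[simp] lemma wordProd_cons (i : ℕ) (l : List ℕ) :
    σ.wordProd e (i :: l) = negMode σ (e i) * σ.wordProd e l := by
  simp [wordProd]

lemma wordProd_append (l l' : List ℕ) :
    σ.wordProd e (l ++ l') = σ.wordProd e l * σ.wordProd e l' := by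
  simp [wordProd]

/-- `[X_i, X_j]` is a multiple of `X_{commLabel e i j}`. -/
def commLabel (i j : ℕ) : ℕ :=
  e.symm (bracketIndex (e i).1 (e j).1, (e i).2 + (e j).2 + 1)

variable {σ} in
lemma wordProd_swap_apply (hσ : HasBracket k σ) (p s : List ℕ) (i j : ℕ) (x : V) :
    σ.wordProd e (p ++ i :: j :: s) x = σ.wordProd e (p ++ j :: i :: s) x
      + bracketCoeff (e i).1 (e j).1 • σ.wordProd e (p ++ commLabel e i j :: s) x := by
  simp only [wordProd_append, wordProd_cons, Module.End.mul_apply, commLabel,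
    Equiv.apply_symm_apply]
  rw [negMode_negMode hσ, map_add, map_smul]

variable {σ e}

/-- Swapping an adjacent inversion changes a word by a multiple of a shorter word, so induction
on (length, number of inversions) reduces every word to non-increasing ones. -/
theorem map_wordProd_of_isChain {τ : AffineFamily U} (hσ : HasBracket k σ)
    (hτ : HasBracket k τ) (g : V →ₗ[ℂ] U) {x : V} {y : U}
    (h : ∀ l : List ℕ, l.IsChain (· ≥ ·) → g (σ.wordProd e l x) = τ.wordProd e l y)
    (l : List ℕ) : g (σ.wordProd e l x) = τ.wordProd e l y := by
  by_cases hl : l.IsChain (· ≥ ·)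
  · exact h l hl
  obtain ⟨p, i, j, s, rfl, hij⟩ := exists_eq_append_cons_cons_lt hl
  rw [wordProd_swap_apply e hσ, wordProd_swap_apply e hτ, map_add, map_smul,
    map_wordProd_of_isChain hσ hτ g h (p ++ j :: i :: s),
    map_wordProd_of_isChain hσ hτ g h (p ++ commLabel e i j :: s)]
termination_by (l.length, invCount l)
decreasing_by
  all_goals subst_vars
  · exact Prod.Lex.right' _ (by simp) (invCount_swap_lt p s hij)
  · exact Prod.Lex.left _ _ (by simp)

end Words

section Intertwiner

variable {σ : AffineFamily V} {τ : AffineFamily U} {e : ℕ ≃ Fin 3 × ℕ}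

def IsIntertwiner (σ : AffineFamily V) (τ : AffineFamily U) (g : V →ₗ[ℂ] U) : Prop :=
  ∀ a n, g ∘ₗ σ.mode a n = τ.mode a n ∘ₗ g

lemma IsIntertwiner.map_negMode {g : V →ₗ[ℂ] U} (hg : IsIntertwiner σ τ g) (q : Fin 3 × ℕ)
    (x : V) : g (negMode σ q x) = negMode τ q (g x) := by
  simpa only [negMode_eq_mode, LinearMap.comp_apply] using LinearMap.congr_fun (hg _ _) x

lemma map_wordProd_apply {g : V →ₗ[ℂ] U}
    (hg : ∀ q x, g (negMode σ q x) = negMode τ q (g x)) (l : List ℕ) (x : V) :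
    g (σ.wordProd e l x) = τ.wordProd e l (g x) := by
  induction l with
  | nil => rfl
  | cons i l ih => simp only [wordProd_cons, Module.End.mul_apply, hg, ih]

variable {T : Type*} {v : T → V} {b : Module.Basis (T × {l : List ℕ // l.IsChain (· ≥ ·)}) ℂ V}

lemma IsIntertwiner.eq_of_basis (hb : ∀ t l, b (t, l) = σ.wordProd e l.1 (v t))
    {g₁ g₂ : V →ₗ[ℂ] U} (h₁ : IsIntertwiner σ τ g₁) (h₂ : IsIntertwiner σ τ g₂)
    (hv : ∀ t, g₁ (v t) = g₂ (v t)) : g₁ = g₂ :=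
  b.ext fun ⟨t, l⟩ => by
    rw [hb, map_wordProd_apply h₁.map_negMode, map_wordProd_apply h₂.map_negMode, hv]

lemma map_negMode_of_basis (hσ : HasBracket k σ) (hτ : HasBracket k τ)
    (hb : ∀ t l, b (t, l) = σ.wordProd e l.1 (v t)) {g : V →ₗ[ℂ] U}
    (hg : ∀ t l, l.IsChain (· ≥ ·) → g (σ.wordProd e l (v t)) = τ.wordProd e l (g (v t)))
    (q : Fin 3 × ℕ) (x : V) : g (negMode σ q x) = negMode τ q (g x) := by
  have hword t := map_wordProd_of_isChain hσ hτ g (hg t)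
  suffices g ∘ₗ negMode σ q = negMode τ q ∘ₗ g from LinearMap.congr_fun this x
  refine b.ext fun ⟨t, l⟩ => ?_
  have hcons := hword t (e.symm q :: l)
  simp only [wordProd_cons, Equiv.apply_symm_apply, Module.End.mul_apply] at hcons
  simp only [LinearMap.comp_apply, hb, hcons, hword]

/-- Move the non-negative mode past `X = negMode σ q` with the bracket on both sides; the
bracket term is a mode of either sign, handled by `hneg` or `hx`. -/
lemma map_mode_negMode_of_nonneg (hσ : HasBracket k σ) (hτ : HasBracket k τ)
    {g : V →ₗ[ℂ] U} (hneg : ∀ q x, g (negMode σ q x) = negMode τ q (g x)) {x : V}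
    (hx : ∀ a n, 0 ≤ n → g (σ.mode a n x) = τ.mode a n (g x)) (q : Fin 3 × ℕ)
    (a : Fin 3) {n : ℤ} (hn : 0 ≤ n) :
    g (σ.mode a n (negMode σ q x)) = τ.mode a n (g (negMode σ q x)) := by
  obtain ⟨c, j⟩ := q
  have hsum : g (σ.mode (bracketIndex a c) (n + -(j + 1)) x)
      = τ.mode (bracketIndex a c) (n + -(j + 1)) (g x) := by
    rcases lt_or_ge (n + -(j + 1)) 0 with h | h
    · rw [mode_eq_negMode σ _ h, mode_eq_negMode τ _ h, hneg]
    · exact hx _ _ h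
  calc g (σ.mode a n (negMode σ (c, j) x))
      = negMode τ (c, j) (g (σ.mode a n x))
          + bracketCoeff a c • g (σ.mode (bracketIndex a c) (n + -(j + 1)) x)
          + (if n + -(j + 1) = 0 then killing a c * k * n else 0) • g x := by
        rw [negMode_eq_mode, hσ, map_add, map_add, map_smul, map_smul, ← negMode_eq_mode, hneg]
    _ = τ.mode a n (negMode τ (c, j) (g x)) := by
        rw [hx a n hn, hsum, negMode_eq_mode, hτ a c n]
    _ = τ.mode a n (g (negMode σ (c, j) x)) := by rw [hneg]

theorem isIntertwiner_of_basis (hσ : HasBracket k σ) (hτ : HasBracket k τ)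
    (hb : ∀ t l, b (t, l) = σ.wordProd e l.1 (v t)) {g : V →ₗ[ℂ] U}
    (hg : ∀ t l, l.IsChain (· ≥ ·) → g (σ.wordProd e l (v t)) = τ.wordProd e l (g (v t)))
    (hv : ∀ t a n, 0 ≤ n → g (σ.mode a n (v t)) = τ.mode a n (g (v t))) :
    IsIntertwiner σ τ g := by
  have hneg := map_negMode_of_basis hσ hτ hb hg
  intro a n
  rcases lt_or_ge n 0 with hn | hn
  · ext x
    simp only [LinearMap.comp_apply, mode_eq_negMode σ a hn, mode_eq_negMode τ a hn, hneg]
  refine b.ext fun ⟨t, ⟨l, _⟩⟩ => ?_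
  simp only [LinearMap.comp_apply, hb]
  clear ‹l.IsChain _›
  revert a n
  induction l with
  | nil => exact fun a n hn => hv t a n hn
  | cons i l ih =>
    intro a n hn
    simp only [wordProd_cons, Module.End.mul_apply]
    exact map_mode_negMode_of_nonneg hσ hτ hneg (fun a n hn => ih a n hn) _ a hn

theorem bijOn_comp_subtype_isIntertwiner (hσ : HasBracket k σ) (hτ : HasBracket k τ)
    {V₀ : Submodule ℂ V} (hpos : ∀ a n, 0 < n → ∀ v ∈ V₀, σ.mode a n v = 0)
    (A : Fin 3 → Module.End ℂ V₀) (hA : ∀ a, V₀.subtype ∘ₗ A a = σ.mode a 0 ∘ₗ V₀.subtype)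
    {T : Type*} (b0 : Module.Basis T ℂ V₀)
    {b : Module.Basis (T × {l : List ℕ // l.IsChain (· ≥ ·)}) ℂ V}
    (hb : ∀ t l, b (t, l) = σ.wordProd e l.1 (b0 t)) :
    Set.BijOn (fun g : V →ₗ[ℂ] U => g ∘ₗ V₀.subtype) {g | IsIntertwiner σ τ g}
      {f | (∀ a, f ∘ₗ A a = τ.mode a 0 ∘ₗ f) ∧ ∀ a n, 0 < n → τ.mode a n ∘ₗ f = 0} := by
  refine ⟨fun g hg => ⟨fun a => ?_, fun a n hn => ?_⟩, fun g₁ h₁ g₂ h₂ h => ?_, ?_⟩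
  · rw [LinearMap.comp_assoc, hA, ← LinearMap.comp_assoc, hg, LinearMap.comp_assoc]
  · ext v
    simp [← LinearMap.comp_apply (τ.mode a n), ← hg a n, hpos a n hn v v.2]
  · exact h₁.eq_of_basis hb h₂ fun t => LinearMap.congr_fun h (b0 t)
  rintro f ⟨hf0, hfpos⟩
  let g := b.constr ℂ fun p => τ.wordProd e p.2.1 (f (b0 p.1))
  have hgb t (l : {l : List ℕ // l.IsChain (· ≥ ·)}) :
      g (σ.wordProd e l.1 (b0 t)) = τ.wordProd e l.1 (f (b0 t)) := by
    rw [← hb, Module.Basis.constr_basis]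
  have hgf : g ∘ₗ V₀.subtype = f := b0.ext fun t => hgb t ⟨[], List.isChain_nil⟩
  have hgv (v : V₀) : g v = f v := LinearMap.congr_fun hgf v
  refine ⟨g, isIntertwiner_of_basis hσ hτ hb (fun t l hl => ?_) (fun t a n hn => ?_), hgf⟩
  · rw [hgb t ⟨l, hl⟩, hgv]
  rcases hn.eq_or_lt with rfl | hn
  · have h0 := LinearMap.congr_fun (hA a) (b0 t)
    have hf := LinearMap.congr_fun (hf0 a) (b0 t)
    simp only [LinearMap.comp_apply, Submodule.subtype_apply] at h0 hf
    rw [← h0, hgv, hgv, hf]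
  · rw [hpos a n hn _ (b0 t).2, map_zero, hgv]
    exact (LinearMap.congr_fun (hfpos a n hn) (b0 t)).symm

end Intertwiner

end AffineFamily

open AffineFamily

section Blocks

variable [AddCommGroup V] [Module ℂ V] [AddCommGroup W] [Module ℂ W] {ρ : AffineFamily V}
  {ρ' : AffineFamily W}

lemma isIntertwiner_dual_curry_iff (β : V ⊗[ℂ] W →ₗ[ℂ] ℂ) :
    IsIntertwiner ρ ρ'.dual (curry β) ↔ ∀ n : ℤ,
        β ∘ₗ (map (ρ.Jz n) LinearMap.id + map LinearMap.id (ρ'.Jz (-n))) = 0 ∧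
        β ∘ₗ (map (ρ.Jp n) LinearMap.id + map LinearMap.id (ρ'.Jp (-n))) = 0 ∧
        β ∘ₗ (map (ρ.Jm n) LinearMap.id + map LinearMap.id (ρ'.Jm (-n))) = 0 := by
  simp only [IsIntertwiner, comp_map_add_map_eq_zero_iff, dual_mode]
  exact ⟨fun h n => ⟨h 0 n, h 1 n, h 2 n⟩,
    fun h a n => by fin_cases a; exacts [(h n).1, (h n).2.1, (h n).2.2]⟩

lemma zeroModeCompatible_curry_iff {V₀ : Submodule ℂ V}
    (hz0 : ∀ v ∈ V₀, ρ.Jz 0 v ∈ V₀) (hp0 : ∀ v ∈ V₀, ρ.Jp 0 v ∈ V₀)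
    (hm0 : ∀ v ∈ V₀, ρ.Jm 0 v ∈ V₀) (ψ : V₀ ⊗[ℂ] W →ₗ[ℂ] ℂ) :
    ((∀ a, curry ψ ∘ₗ ![(ρ.Jz 0).restrict hz0, (ρ.Jp 0).restrict hp0, (ρ.Jm 0).restrict hm0] a
        = ρ'.dual.mode a 0 ∘ₗ curry ψ) ∧ ∀ a n, 0 < n → ρ'.dual.mode a n ∘ₗ curry ψ = 0) ↔
      (ψ ∘ₗ (map ((ρ.Jz 0).restrict hz0) LinearMap.id + map LinearMap.id (ρ'.Jz 0)) = 0) ∧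
      (ψ ∘ₗ (map ((ρ.Jp 0).restrict hp0) LinearMap.id + map LinearMap.id (ρ'.Jp 0)) = 0) ∧
      (ψ ∘ₗ (map ((ρ.Jm 0).restrict hm0) LinearMap.id + map LinearMap.id (ρ'.Jm 0)) = 0) ∧
      ∀ m : ℤ, 1 ≤ m →
        ψ ∘ₗ map LinearMap.id (ρ'.Jz (-m)) = 0 ∧
        ψ ∘ₗ map LinearMap.id (ρ'.Jp (-m)) = 0 ∧
        ψ ∘ₗ map LinearMap.id (ρ'.Jm (-m)) = 0 := by
  simp only [comp_map_add_map_eq_zero_iff, comp_map_id_eq_zero_iff, dual_mode,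
    LinearMap.neg_comp, neg_eq_zero, neg_zero, Int.lt_iff_add_one_le, zero_add]
  refine ⟨fun ⟨h0, hpos⟩ => ⟨h0 0, h0 1, h0 2, fun m hm => ⟨hpos 0 m hm, hpos 1 m hm, hpos 2 m hm⟩⟩,
    fun ⟨hz, hp, hm, hpos⟩ => ⟨fun a => ?_, fun a m hm' => ?_⟩⟩
  · fin_cases a; exacts [hz, hp, hm]
  · fin_cases a; exacts [(hpos m hm').1, (hpos m hm').2.1, (hpos m hm').2.2]

end Blocks

/-- **Beauville's propagation lemma for the points `0`, `∞` on
`ℂP¹`.**  Let `{J'^a_n}` on `W` be a level-`k` representation, and `{J^a_n}` on `V`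
a level-`k` representation with a subspace `V₀` annihilated by all positive modes and
preserved by the zero modes, such that `V` is free over the negative modes: for some
enumeration `X₁, X₂, …` of `{J^a_{−n} : n ≥ 1}` (via a bijection `e`) and a basis
`{v_t}` of `V₀`, the vectors `X_{i₁}⋯X_{i_r} v_t` over all non-increasing index
sequences form a basis of `V`.  Then restriction of functionals `β ↦ β|_{V₀⊗W}` is a
linear isomorphism from the space of two-point conformal blocks on `V ⊗ W` onto the
space of functionals `ψ` on `V₀ ⊗ W` killed by the diagonal zero modes and by
`id ⊗ J'^a_{−m}` for `m ≥ 1`. -/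
theorem statement15 (k : ℂ) [AddCommGroup V] [Module ℂ V] [AddCommGroup W] [Module ℂ W]
    (ρ : AffineFamily V) (hρ : IsLevelRep k ρ)
    (ρ' : AffineFamily W) (hρ' : IsLevelRep k ρ')
    (V₀ : Submodule ℂ V)
    (hann : ∀ n : ℤ, 1 ≤ n → ∀ v ∈ V₀, ρ.Jz n v = 0 ∧ ρ.Jp n v = 0 ∧ ρ.Jm n v = 0)
    (hz0 : ∀ v ∈ V₀, ρ.Jz 0 v ∈ V₀)
    (hp0 : ∀ v ∈ V₀, ρ.Jp 0 v ∈ V₀)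
    (hm0 : ∀ v ∈ V₀, ρ.Jm 0 v ∈ V₀)
    (e : ℕ ≃ Fin 3 × ℕ) {T : Type*} (b0 : Module.Basis T ℂ V₀)
    (b : Module.Basis (T × {l : List ℕ // l.Chain' (· ≥ ·)}) ℂ V)
    (hb : ∀ (t : T) (l : {l : List ℕ // l.Chain' (· ≥ ·)}),
      b (t, l) = ((l.val.map fun i => negMode ρ (e i)).prod) (b0 t : V)) :
    Set.BijOn
      (fun β : (V ⊗[ℂ] W) →ₗ[ℂ] ℂ => β ∘ₗ TensorProduct.map V₀.subtype LinearMap.id)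
      {β : (V ⊗[ℂ] W) →ₗ[ℂ] ℂ | ∀ n : ℤ,
        β ∘ₗ (TensorProduct.map (ρ.Jz n) LinearMap.id
            + TensorProduct.map LinearMap.id (ρ'.Jz (-n))) = 0 ∧
        β ∘ₗ (TensorProduct.map (ρ.Jp n) LinearMap.id
            + TensorProduct.map LinearMap.id (ρ'.Jp (-n))) = 0 ∧
        β ∘ₗ (TensorProduct.map (ρ.Jm n) LinearMap.id
            + TensorProduct.map LinearMap.id (ρ'.Jm (-n))) = 0}
      {ψ : (V₀ ⊗[ℂ] W) →ₗ[ℂ] ℂ |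
        (ψ ∘ₗ (TensorProduct.map ((ρ.Jz 0).restrict hz0) LinearMap.id
            + TensorProduct.map LinearMap.id (ρ'.Jz 0)) = 0) ∧
        (ψ ∘ₗ (TensorProduct.map ((ρ.Jp 0).restrict hp0) LinearMap.id
            + TensorProduct.map LinearMap.id (ρ'.Jp 0)) = 0) ∧
        (ψ ∘ₗ (TensorProduct.map ((ρ.Jm 0).restrict hm0) LinearMap.id
            + TensorProduct.map LinearMap.id (ρ'.Jm 0)) = 0) ∧
        ∀ m : ℤ, 1 ≤ m →
          ψ ∘ₗ TensorProduct.map LinearMap.id (ρ'.Jz (-m)) = 0 ∧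
          ψ ∘ₗ TensorProduct.map LinearMap.id (ρ'.Jp (-m)) = 0 ∧
          ψ ∘ₗ TensorProduct.map LinearMap.id (ρ'.Jm (-m)) = 0} := by
  have hpos a n (hn : 0 < n) v (hv : v ∈ V₀) : ρ.mode a n v = 0 := by
    obtain ⟨hz, hp, hm⟩ := hann n hn v hv
    fin_cases a; exacts [hz, hp, hm]
  have hA a : V₀.subtype ∘ₗ
      ![(ρ.Jz 0).restrict hz0, (ρ.Jp 0).restrict hp0, (ρ.Jm 0).restrict hm0] a
        = ρ.mode a 0 ∘ₗ V₀.subtype := by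
    fin_cases a <;> rfl
  have key := bijOn_comp_subtype_isIntertwiner (τ := ρ'.dual) hρ.hasBracket hρ'.hasBracket.dual
    hpos _ hA b0 hb
  have hres := zeroModeCompatible_curry_iff (ρ' := ρ') hz0 hp0 hm0
  refine ⟨fun β hβ => ?_, fun β₁ h₁ β₂ h₂ h => ?_, fun ψ hψ => ?_⟩
  · exact (hres _).1 (key.mapsTo ((isIntertwiner_dual_curry_iff β).2 hβ))
  · exact curry_injective <| key.injOn ((isIntertwiner_dual_curry_iff β₁).2 h₁)
      ((isIntertwiner_dual_curry_iff β₂).2 h₂) (congrArg curry h)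
  · obtain ⟨g, hg, hgψ⟩ := key.surjOn ((hres ψ).2 hψ)
    exact ⟨lift g, (isIntertwiner_dual_curry_iff _).1 hg, curry_injective hgψ⟩
end
end

section
/- Let {J^a_n} be a level-k representation of affine sl(2) on V and let v ∈ V satisfy J⁻₀ v = 0, J⁰₀ v = −k·v, and J^a_n v = 0 for all n ≥ 1 and a ∈ {0,+,−} (v is a lowest-weight vector of the type occurring in D^{+,k}_{k/2}). Then the vector w := J⁻_{−1} v satisfies J⁻₀ w = 0, J⁰₀ w = −(k+2)·w, and J^a_n w = 0 for all n ≥ 1 and a ∈ {0,+,−}; i.e. w is again a lowest-weight (singular) vector. (This is the singular vector generating the maximal submodule W⁺_{k/2} of the affine Verma module D^{+,k}_{k/2}, whose quotient is the spectral-flowed vacuum module D^{k,1}₀.) -/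
/-!
Level-`k` representations of affine `sl(2)`.

A level-`k` representation of affine `sl(2)` on a complex vector space `V` is a
family of linear endomorphisms `J⁰_n, J⁺_n, J⁻_n` (`n ∈ ℤ`) satisfying
`[J⁺_m, J⁻_n] = J⁰_{m+n} + k·m·δ_{m+n,0}·id`, `[J⁰_m, J^±_n] = ±2 J^±_{m+n}`,
`[J⁰_m, J⁰_n] = 2k·m·δ_{m+n,0}·id`, `[J⁺_m, J⁺_n] = [J⁻_m, J⁻_n] = 0`.

For `s ∈ ℤ`, the spectral flow `ϑ_s` replaces `J^±_n` by `J^±_{n∓s}` and `J⁰_n` by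
`J⁰_n − s·k·δ_{n,0}·id`.
-/

noncomputable section

variable {V W : Type*}

/-- Let `{J^a_n}` be a level-`k` representation of affine `sl(2)`
on `V` and let `v ∈ V` satisfy `J⁻₀ v = 0`, `J⁰₀ v = −k·v`, and `J^a_n v = 0` for all
`n ≥ 1` (a lowest-weight vector of the type occurring in `D^{+,k}_{k/2}`).  Then
`w := J⁻_{−1} v` satisfies `J⁻₀ w = 0`, `J⁰₀ w = −(k+2)·w`, and `J^a_n w = 0` for all
`n ≥ 1`; i.e. `w` is again a lowest-weight (singular) vector. -/
theorem statement17 (k : ℂ) [AddCommGroup V] [Module ℂ V]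
    (ρ : AffineFamily V) (hρ : IsLevelRep k ρ) (v : V)
    (hm0 : ρ.Jm 0 v = 0)
    (hz0 : ρ.Jz 0 v = (-k) • v)
    (hpos : ∀ n : ℤ, 1 ≤ n → ρ.Jz n v = 0 ∧ ρ.Jp n v = 0 ∧ ρ.Jm n v = 0) :
    ρ.Jm 0 (ρ.Jm (-1) v) = 0 ∧
    ρ.Jz 0 (ρ.Jm (-1) v) = (-(k + 2)) • ρ.Jm (-1) v ∧
    ∀ n : ℤ, 1 ≤ n →
      ρ.Jz n (ρ.Jm (-1) v) = 0 ∧ ρ.Jp n (ρ.Jm (-1) v) = 0 ∧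
        ρ.Jm n (ρ.Jm (-1) v) = 0 := by
  obtain ⟨hpm, hzp, hzm, hzz, hpp, hmm⟩ := hρ
  refine ⟨?_, ?_, ?_⟩
  · have h := congrArg (fun f => f v) (hmm 0 (-1))
    simp only [Module.End.mul_apply] at h
    rw [h, hm0, map_zero]
  · have h := congrArg (fun f => f v) (hzm 0 (-1))
    simp only [LinearMap.sub_apply, Module.End.mul_apply, LinearMap.smul_apply] at h
    have : ρ.Jz 0 (ρ.Jm (-1) v) = ρ.Jm (-1) (ρ.Jz 0 v) + (-2 : ℂ) • ρ.Jm (0 + -1) v := by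
      linear_combination (norm := module) h
    rw [this, hz0, map_smul]
    norm_num
    module
  · intro n hn
    refine ⟨?_, ?_, ?_⟩
    · have h := congrArg (fun f => f v) (hzm n (-1))
      simp only [LinearMap.sub_apply, Module.End.mul_apply, LinearMap.smul_apply] at h
      have h' : ρ.Jz n (ρ.Jm (-1) v) = ρ.Jm (-1) (ρ.Jz n v) + (-2 : ℂ) • ρ.Jm (n + -1) v := by
        linear_combination (norm := module) h
      rw [h', (hpos n hn).1, map_zero]
      rcases eq_or_lt_of_le hn with he | hl
      · rw [← he]; norm_num [hm0]
      · rw [(hpos (n + -1) (by omega)).2.2]; simp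
    · have h := congrArg (fun f => f v) (hpm n (-1))
      simp only [LinearMap.sub_apply, Module.End.mul_apply, LinearMap.add_apply,
        LinearMap.smul_apply, Module.End.one_apply] at h
      have h' : ρ.Jp n (ρ.Jm (-1) v) = ρ.Jm (-1) (ρ.Jp n v) + ρ.Jz (n + -1) v
          + (if n + -1 = 0 then k * (n : ℂ) else 0) • v := by
        linear_combination (norm := module) h
      rw [h', (hpos n hn).2.1, map_zero]
      rcases eq_or_lt_of_le hn with he | hl
      · rw [← he]; norm_num [hz0]
      · rw [(hpos (n + -1) (by omega)).1]
        have : ¬ (n + -1 = 0) := by omega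
        simp [this]
    · have h := congrArg (fun f => f v) (hmm n (-1))
      simp only [Module.End.mul_apply] at h
      rw [h, (hpos n hn).2.2, map_zero]
end
end

section
/- Let {J^a_n} be a level-k representation of affine sl(2) on V possessing a vector v₀ with J^a_n v₀ = 0 for all n ≥ 0 and a ∈ {0,+,−}, and suppose V is freely generated from v₀ by the negative modes: there exists an enumeration X₁, X₂, X₃, … of the family {J^a_{−n} : a ∈ {0,+,−}, n ≥ 1} such that the vectors X_{i₁} X_{i₂} ⋯ X_{i_r} v₀, over all finite non-increasing index sequences i₁ ≥ ⋯ ≥ i_r (r ≥ 0), form a basis of V (V is the vacuum module D^k₀). Then the space { φ ∈ V* : φ ∘ J^a_{−m} = 0 for all a ∈ {0,+,−} and all m ≥ 0 } is one-dimensional, spanned by the coordinate functional of v₀ with respect to the given basis. (This says that the one-point conformal block space H(p, D^k₀) on ℂP¹ is one-dimensional.) -/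
/-!
Level-`k` representations of affine `sl(2)`.

A level-`k` representation of affine `sl(2)` on a complex vector space `V` is a
family of linear endomorphisms `J⁰_n, J⁺_n, J⁻_n` (`n ∈ ℤ`) satisfying
`[J⁺_m, J⁻_n] = J⁰_{m+n} + k·m·δ_{m+n,0}·id`, `[J⁰_m, J^±_n] = ±2 J^±_{m+n}`,
`[J⁰_m, J⁰_n] = 2k·m·δ_{m+n,0}·id`, `[J⁺_m, J⁺_n] = [J⁻_m, J⁻_n] = 0`.

For `s ∈ ℤ`, the spectral flow `ϑ_s` replaces `J^±_n` by `J^±_{n∓s}` and `J⁰_n` by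
`J⁰_n − s·k·δ_{n,0}·id`.
-/

noncomputable section

variable {V W : Type*}

/-!
A functional killing all negative modes vanishes on every basis vector other than `v₀`, since
each of them is a negative mode applied to a vector, so it is a multiple of the `v₀`-coordinate.
Conversely, the `v₀`-coordinate kills the image of every negative mode `X`: the commutator of two
negative modes is a multiple of a negative mode, so modulo shorter words a word
`X_{i₁} ⋯ X_{i_r} v₀` may be reordered, and by induction on `r` every nonempty word is a
combination of nonempty sorted words, i.e. of basis vectors other than `v₀`. It also kills the zero
modes, because `J^a_0 X = X J^a_0 + z X'` for negative modes `X, X'` and `J^a_0 v₀ = 0`.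
-/
section Straightening

variable {R ι : Type*} [CommRing R] [AddCommGroup V] [Module R V]
  (X : ι → Module.End R V) (v₀ : V)

def word (l : List ι) : V := (l.map X).prod v₀

@[simp]
lemma word_nil : word X v₀ [] = v₀ := by simp [word]

@[simp]
lemma word_cons (i : ι) (l : List ι) : word X v₀ (i :: l) = X i (word X v₀ l) := by
  simp [word, Module.End.mul_apply]

def wordSpan (n : ℕ) : Submodule R V :=
  Submodule.span R (word X v₀ '' {l | l ≠ [] ∧ l.length < n})

variable {X v₀}

lemma wordSpan_mono {m n : ℕ} (h : m ≤ n) : wordSpan X v₀ m ≤ wordSpan X v₀ n :=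
  Submodule.span_mono <| Set.image_mono fun _ ⟨hl, hlm⟩ => ⟨hl, hlm.trans_le h⟩

lemma apply_mem_wordSpan_succ (i : ι) {n : ℕ} {x : V} (hx : x ∈ wordSpan X v₀ n) :
    X i x ∈ wordSpan X v₀ (n + 1) := by
  have hmap : (wordSpan X v₀ n).map (X i) ≤ wordSpan X v₀ (n + 1) := by
    rw [wordSpan, Submodule.map_span, ← Set.image_comp]
    refine Submodule.span_le.2 ?_
    rintro _ ⟨l, ⟨-, hl⟩, rfl⟩
    exact Submodule.subset_span ⟨i :: l, ⟨List.cons_ne_nil i l, by simpa using hl⟩, by simp⟩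
  exact hmap ⟨x, hx, rfl⟩

lemma word_sub_word_mem_wordSpan_of_perm
    (hX : ∀ i j, ∃ (z : R) (r : ι), X i * X j = X j * X i + z • X r)
    {l l' : List ι} (h : l.Perm l') : word X v₀ l - word X v₀ l' ∈ wordSpan X v₀ l.length := by
  induction h with
  | nil => simp
  | cons i _ ih =>
    simpa only [word_cons, map_sub, List.length_cons] using apply_mem_wordSpan_succ i ih
  | swap i j l =>
    obtain ⟨z, r, hjir⟩ := hX j i
    have hdiff : word X v₀ (j :: i :: l) - word X v₀ (i :: j :: l) = z • word X v₀ (r :: l) := by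
      simp only [word_cons, ← Module.End.mul_apply, hjir, LinearMap.add_apply,
        LinearMap.smul_apply]
      abel
    rw [hdiff]
    exact Submodule.smul_mem _ _ <| Submodule.subset_span
      ⟨r :: l, ⟨List.cons_ne_nil r l, by simp⟩, rfl⟩
  | trans h₁₂ _ ih₁₂ ih₂₃ =>
    rw [← sub_add_sub_cancel]
    exact add_mem ih₁₂ (h₁₂.length_eq ▸ ih₂₃)

variable [LinearOrder ι] (b : Module.Basis {l : List ι // l.IsChain (· ≥ ·)} R V)
  (hb : ∀ s : {l : List ι // l.IsChain (· ≥ ·)}, b s = word X v₀ s.val)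
include hb

lemma wordSpan_le_ker_coord_nil
    (hX : ∀ i j, ∃ (z : R) (r : ι), X i * X j = X j * X i + z • X r) (n : ℕ) :
    wordSpan X v₀ n ≤ LinearMap.ker (b.coord ⟨[], List.isChain_nil⟩) := by
  induction n with
  | zero => simp [wordSpan]
  | succ n ih =>
    refine Submodule.span_le.2 ?_
    rintro _ ⟨l, ⟨hl, hln⟩, rfl⟩
    have hperm : l.Perm (l.insertionSort (· ≥ ·)) := (List.perm_insertionSort _ l).symm
    have hsorted : (l.insertionSort (· ≥ ·)).IsChain (· ≥ ·) :=
      List.sortedGE_insertionSort.isChain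
    have hs : l.insertionSort (· ≥ ·) ≠ [] := fun h => hl (List.perm_nil.1 (h ▸ hperm))
    have hsplit : word X v₀ l = (word X v₀ l - word X v₀ (l.insertionSort (· ≥ ·)))
        + b ⟨l.insertionSort (· ≥ ·), hsorted⟩ := by
      rw [hb, sub_add_cancel]
    rw [SetLike.mem_coe, LinearMap.mem_ker, hsplit, map_add, ih, zero_add]
    · simp [Module.Basis.coord_apply, hs]
    · exact wordSpan_mono (Nat.lt_succ_iff.1 hln) (word_sub_word_mem_wordSpan_of_perm hX hperm)

lemma coord_nil_word (hX : ∀ i j, ∃ (z : R) (r : ι), X i * X j = X j * X i + z • X r)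
    {l : List ι} (hl : l ≠ []) : b.coord ⟨[], List.isChain_nil⟩ (word X v₀ l) = 0 :=
  wordSpan_le_ker_coord_nil b hb hX (l.length + 1)
    (Submodule.subset_span ⟨l, ⟨hl, l.length.lt_succ_self⟩, rfl⟩)

lemma coord_nil_comp_eq_zero (hX : ∀ i j, ∃ (z : R) (r : ι), X i * X j = X j * X i + z • X r)
    (i : ι) : b.coord ⟨[], List.isChain_nil⟩ ∘ₗ X i = 0 :=
  b.ext fun s => by
    rw [LinearMap.comp_apply, hb, ← word_cons, LinearMap.zero_apply]
    exact coord_nil_word b hb hX (List.cons_ne_nil i s)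

lemma eq_smul_coord_nil_of_comp_eq_zero {φ : V →ₗ[R] R} (hφ : ∀ i, φ ∘ₗ X i = 0) :
    φ = φ v₀ • b.coord ⟨[], List.isChain_nil⟩ := by
  refine b.ext fun s => ?_
  obtain ⟨_ | ⟨i, l⟩, hs⟩ := s
  · rw [LinearMap.smul_apply, Module.Basis.coord_apply, Module.Basis.repr_self,
      Finsupp.single_eq_same, smul_eq_mul, mul_one, hb, word_nil]
  · have hne : (⟨[], List.isChain_nil⟩ : {l : List ι // l.IsChain (· ≥ ·)}) ≠ ⟨i :: l, hs⟩ := by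
      simp
    rw [LinearMap.smul_apply, Module.Basis.coord_apply, Module.Basis.repr_self,
      Finsupp.single_eq_of_ne hne, smul_zero, hb, word_cons, ← LinearMap.comp_apply, hφ,
      LinearMap.zero_apply]

end Straightening

namespace AffineFamily

variable [AddCommGroup V] [Module ℂ V]

def J (ρ : AffineFamily V) (a : Fin 3) (n : ℤ) : Module.End ℂ V :=
  if a = 0 then ρ.Jz n else if a = 1 then ρ.Jp n else ρ.Jm n

variable {ρ : AffineFamily V}

lemma forall_J_iff (P : Module.End ℂ V → Prop) {n : ℤ} :
    (∀ a, P (ρ.J a n)) ↔ P (ρ.Jz n) ∧ P (ρ.Jp n) ∧ P (ρ.Jm n) :=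
  ⟨fun h => ⟨h 0, h 1, h 2⟩, fun ⟨h₀, h₁, h₂⟩ a => by fin_cases a <;> assumption⟩

lemma negMode_eq_J (p : Fin 3 × ℕ) : negMode ρ p = ρ.J p.1 (-((p.2 : ℤ) + 1)) := rfl

end AffineFamily

open AffineFamily

section LevelRep

variable [AddCommGroup V] [Module ℂ V] {k : ℂ} {ρ : AffineFamily V}

lemma IsLevelRep.exists_J_mul_J (hρ : IsLevelRep k ρ) (a c : Fin 3) {m n : ℤ} (h : m + n ≠ 0) :
    ∃ (d : Fin 3) (z : ℂ), ρ.J a m * ρ.J c n = ρ.J c n * ρ.J a m + z • ρ.J d (m + n) := by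
  obtain ⟨hpm, hzp, hzm, hzz, hpp, hmm⟩ := hρ
  have h' : n + m ≠ 0 := by omega
  simp_rw [← sub_eq_iff_eq_add']
  fin_cases a <;> fin_cases c
  · exact ⟨0, 0, by simpa [J, h] using hzz m n⟩
  · exact ⟨1, 2, hzp m n⟩
  · exact ⟨2, -2, hzm m n⟩
  · exact ⟨1, -2, by rw [← neg_sub]; simp [J, hzp n m, add_comm]⟩
  · exact ⟨0, 0, by simpa [J, sub_eq_zero] using hpp m n⟩
  · exact ⟨0, 1, by simpa [J, h] using hpm m n⟩
  · exact ⟨2, 2, by rw [← neg_sub]; simp [J, hzm n m, add_comm]⟩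
  · have hpm' := hpm n m
    rw [if_neg h', zero_smul, add_zero, add_comm n m] at hpm'
    exact ⟨0, -1, by rw [← neg_sub]; simp [J, hpm']⟩
  · exact ⟨0, 0, by simpa [J, sub_eq_zero] using hmm m n⟩

lemma IsLevelRep.exists_J_mul_negMode (hρ : IsLevelRep k ρ) (a : Fin 3) (m : ℕ)
    (q : Fin 3 × ℕ) : ∃ (z : ℂ) (r : Fin 3 × ℕ),
      ρ.J a (-m) * negMode ρ q = negMode ρ q * ρ.J a (-m) + z • negMode ρ r := by
  obtain ⟨d, z, h⟩ := hρ.exists_J_mul_J a q.1 (m := -m) (n := -((q.2 : ℤ) + 1)) (by omega)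
  refine ⟨z, (d, m + q.2), ?_⟩
  rw [negMode_eq_J, h, negMode_eq_J]
  congr 3
  push_cast
  ring

lemma IsLevelRep.exists_negMode_mul_negMode (hρ : IsLevelRep k ρ) (p q : Fin 3 × ℕ) :
    ∃ (z : ℂ) (r : Fin 3 × ℕ),
      negMode ρ p * negMode ρ q = negMode ρ q * negMode ρ p + z • negMode ρ r := by
  obtain ⟨z, r, h⟩ := hρ.exists_J_mul_negMode p.1 (p.2 + 1) q
  push_cast at h
  exact ⟨z, r, h⟩

lemma IsLevelRep.coord_nil_comp_J (hρ : IsLevelRep k ρ) {v₀ : V} (hv₀ : ∀ a, ρ.J a 0 v₀ = 0)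
    (e : ℕ ≃ Fin 3 × ℕ) (b : Module.Basis {l : List ℕ // l.IsChain (· ≥ ·)} ℂ V)
    (hb : ∀ s : {l : List ℕ // l.IsChain (· ≥ ·)},
      b s = word (fun i => negMode ρ (e i)) v₀ s.val) (a : Fin 3) (m : ℕ) :
    b.coord ⟨[], List.isChain_nil⟩ ∘ₗ ρ.J a (-m) = 0 := by
  have hX (i j : ℕ) : ∃ (z : ℂ) (r : ℕ), negMode ρ (e i) * negMode ρ (e j)
      = negMode ρ (e j) * negMode ρ (e i) + z • negMode ρ (e r) := by
    obtain ⟨z, r, h⟩ := hρ.exists_negMode_mul_negMode (e i) (e j)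
    exact ⟨z, e.symm r, by rwa [e.apply_symm_apply]⟩
  have hneg (p : Fin 3 × ℕ) (x : V) : b.coord ⟨[], List.isChain_nil⟩ (negMode ρ p x) = 0 := by
    simpa using LinearMap.congr_fun (coord_nil_comp_eq_zero b hb hX (e.symm p)) x
  cases m with
  | zero =>
    refine b.ext fun s => ?_
    obtain ⟨_ | ⟨i, l⟩, hs⟩ := s
    · simp [hb, hv₀]
    · obtain ⟨z, r, h⟩ := hρ.exists_J_mul_negMode a 0 (e i)
      rw [LinearMap.comp_apply, hb, word_cons, ← Module.End.mul_apply, h, LinearMap.add_apply,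
        LinearMap.smul_apply, Module.End.mul_apply, map_add, map_smul, hneg, hneg, smul_zero,
        add_zero, LinearMap.zero_apply]
  | succ m => exact LinearMap.ext (hneg (a, m))

end LevelRep

/-- Let `{J^a_n}` be a level-`k` representation of affine `sl(2)`
on `V` with a vector `v₀` annihilated by all modes `J^a_n`, `n ≥ 0`, such that `V` is
freely generated from `v₀` by the negative modes: for some enumeration `X₁, X₂, …` of
`{J^a_{−n} : n ≥ 1}` (via a bijection `e`), the vectors `X_{i₁}⋯X_{i_r} v₀` over all
non-increasing index sequences form a basis of `V` (`V` is the vacuum module `D^k₀`).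
Then the space `{φ ∈ V* : φ ∘ J^a_{−m} = 0 for all a, m ≥ 0}` is one-dimensional,
spanned by the coordinate functional of `v₀` (= the basis vector labelled by the
empty sequence) with respect to the given basis. -/
theorem statement19 (k : ℂ) [AddCommGroup V] [Module ℂ V]
    (ρ : AffineFamily V) (hρ : IsLevelRep k ρ) (v₀ : V)
    (hv : ∀ n : ℤ, 0 ≤ n → ρ.Jz n v₀ = 0 ∧ ρ.Jp n v₀ = 0 ∧ ρ.Jm n v₀ = 0)
    (e : ℕ ≃ Fin 3 × ℕ)
    (b : Module.Basis {l : List ℕ // l.Chain' (· ≥ ·)} ℂ V)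
    (hb : ∀ l : {l : List ℕ // l.Chain' (· ≥ ·)},
      b l = ((l.val.map fun i => negMode ρ (e i)).prod) v₀) :
    ∀ φ : V →ₗ[ℂ] ℂ,
      (∀ m : ℤ, 0 ≤ m →
        φ ∘ₗ ρ.Jz (-m) = 0 ∧ φ ∘ₗ ρ.Jp (-m) = 0 ∧ φ ∘ₗ ρ.Jm (-m) = 0) ↔
      ∃ c : ℂ, φ = c • b.coord ⟨[], List.isChain_nil⟩ := by
  intro φ
  have hv₀ : ∀ a, ρ.J a 0 v₀ = 0 := (forall_J_iff fun T => T v₀ = 0).2 (hv 0 le_rfl)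
  constructor
  · intro hφ
    refine ⟨φ v₀, eq_smul_coord_nil_of_comp_eq_zero b hb fun i => ?_⟩
    exact (forall_J_iff fun T => φ ∘ₗ T = 0).2 (hφ ((e i).2 + 1) (by positivity)) (e i).1
  · rintro ⟨c, rfl⟩ m hm
    lift m to ℕ using hm
    refine (forall_J_iff fun T => (c • b.coord ⟨[], List.isChain_nil⟩) ∘ₗ T = 0).1 fun a => ?_
    rw [LinearMap.smul_comp]
    exact (congrArg (c • ·) (hρ.coord_nil_comp_J hv₀ e b hb a m)).trans (smul_zero c)
end
end
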